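/- arXiv:hep-th/0408238 — 2 statements merged into one kernel-verified Lean document; each statement's English description precedes it below -/
import Mathlib

section
/- Let N ≥ 2 and let F be the type A prepotential with Λ = e^{3/2} on the open cone C = {x ∈ ℝ^N : x_1 > x_2 > ⋯ > x_N > 0}. Then the Hessian map x ↦ (∂²F/∂x_i∂x_j(x))_{1≤i,j≤N} is injective on C; that is, if x, y ∈ C have ∂²F/∂x_i∂x_j(x) = ∂²F/∂x_i∂x_j(y) for all i, j, then x = y. -/
/-!
The prepotential is `∑_α g(α(x))` over the roots `α = eᵢ - eⱼ` (`i < j`) and `α = eᵢ`, with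
`g t = t² log (t / Λ) / 2`, so its Hessian is `∑_α α αᵀ g''(α(x))`. The roots `eᵢ - eⱼ` are
orthogonal to `(1, …, 1)`, hence the `i`-th row sum of the Hessian is `g''(xᵢ) = log (xᵢ / Λ) + 3/2`,
which determines `xᵢ`.
-/

open Real Finset

/-- Partial derivative in the `i`-th coordinate direction. -/
noncomputable def pd {N : ℕ} (i : Fin N) (f : (Fin N → ℝ) → ℝ) : (Fin N → ℝ) → ℝ :=
  fun x => fderiv ℝ f x (Pi.single i 1)

/-- Hessian entry `T_ij = ∂²f/∂x_i∂x_j`. -/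
noncomputable def hess {N : ℕ} (f : (Fin N → ℝ) → ℝ) (i j : Fin N) : (Fin N → ℝ) → ℝ :=
  pd i (pd j f)

/-- The open cone `x₁ > x₂ > ⋯ > x_N > 0`. -/
def cone (N : ℕ) : Set (Fin N → ℝ) := {x | StrictAnti x ∧ ∀ i, 0 < x i}

/-- The type A prepotential with cut-off `Λ`. -/
noncomputable def FA (N : ℕ) (Λ : ℝ) (x : Fin N → ℝ) : ℝ :=
  (1/2) * ∑ i : Fin N, ∑ j : Fin N,
      (if i < j then (x i - x j)^2 * Real.log ((x i - x j)/Λ) else 0)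
  + (1/2) * ∑ i : Fin N, (x i)^2 * Real.log (x i / Λ)

open Filter Topology

section RootSum

variable {N : ℕ}

/-- The weights make this class closed under partial differentiation on the cone. -/
noncomputable def rootSum (w : Fin N → Fin N → ℝ) (v : Fin N → ℝ) (g : ℝ → ℝ)
    (x : Fin N → ℝ) : ℝ :=
  ∑ i, ∑ j, (if i < j then w i j * g (x i - x j) else 0) + ∑ i, v i * g (x i)

lemma isOpen_cone : IsOpen (cone N) := by
  have hcone : cone N =
      (⋂ i, ⋂ j, ⋂ (_ : i < j), {x | x j < x i}) ∩ ⋂ i, {x | 0 < x i} := by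
    ext x
    simp [cone, StrictAnti]
  rw [hcone]
  exact (isOpen_iInter_of_finite fun i => isOpen_iInter_of_finite fun j =>
      isOpen_iInter_of_finite fun _ => isOpen_lt (continuous_apply j) (continuous_apply i)).inter
    (isOpen_iInter_of_finite fun i => isOpen_lt continuous_const (continuous_apply i))

lemma sum_rootSum {ι : Type*} (s : Finset ι) (w : ι → Fin N → Fin N → ℝ) (v : ι → Fin N → ℝ)
    (g : ℝ → ℝ) (x : Fin N → ℝ) :
    ∑ k ∈ s, rootSum (w k) (v k) g x =
      rootSum (fun i j => ∑ k ∈ s, w k i j) (fun i => ∑ k ∈ s, v k i) g x := by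
  simp only [rootSum, sum_add_distrib, sum_mul]
  congr 1
  · rw [sum_comm]
    refine sum_congr rfl fun i _ => ?_
    rw [sum_comm]
    refine sum_congr rfl fun j _ => ?_
    split_ifs <;> simp
  · exact sum_comm

variable {w : Fin N → Fin N → ℝ} {v : Fin N → ℝ} {g g' g'' : ℝ → ℝ} {x : Fin N → ℝ}

lemma fderiv_rootSum_apply (hg : ∀ t, 0 < t → HasDerivAt g (g' t) t) (hx : x ∈ cone N)
    (u : Fin N → ℝ) :
    fderiv ℝ (rootSum w v g) x u =
      rootSum (fun i j => w i j * (u i - u j)) (fun i => v i * u i) g' x := by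
  let pr : Fin N → (Fin N → ℝ) →L[ℝ] ℝ := ContinuousLinearMap.proj
  have hderiv : HasFDerivAt (rootSum w v g)
      (∑ i, ∑ j, (if i < j then (w i j * g' (x i - x j)) • (pr i - pr j) else 0)
        + ∑ i, (v i * g' (x i)) • pr i) x := by
    refine (HasFDerivAt.fun_sum fun i _ => HasFDerivAt.fun_sum fun j _ => ?_).add
      (HasFDerivAt.fun_sum fun i _ => ?_)
    · by_cases hij : i < j
      · simp only [hij, if_true, ← smul_smul]
        exact ((hg _ (sub_pos.2 (hx.1 hij))).comp_hasFDerivAt x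
          ((pr i).hasFDerivAt.sub (pr j).hasFDerivAt)).const_mul (w i j)
      · simpa only [hij, if_false] using hasFDerivAt_const (0 : ℝ) x
    · rw [← smul_smul]
      exact ((hg _ (hx.2 i)).comp_hasFDerivAt x (pr i).hasFDerivAt).const_mul (v i)
  rw [hderiv.fderiv]
  simp [rootSum, pr, apply_ite (fun L : (Fin N → ℝ) →L[ℝ] ℝ => L u), mul_assoc, mul_comm (g' _)]

lemma pd_rootSum_eventuallyEq (hg : ∀ t, 0 < t → HasDerivAt g (g' t) t) (hx : x ∈ cone N)
    (k : Fin N) :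
    pd k (rootSum w v g) =ᶠ[𝓝 x] rootSum
      (fun i j => w i j * ((Pi.single k 1 : Fin N → ℝ) i - (Pi.single k 1 : Fin N → ℝ) j))
      (fun i => v i * (Pi.single k 1 : Fin N → ℝ) i) g' :=
  eventually_of_mem (isOpen_cone.mem_nhds hx) fun _ hz => fderiv_rootSum_apply hg hz _

lemma hess_rootSum (hg : ∀ t, 0 < t → HasDerivAt g (g' t) t)
    (hg' : ∀ t, 0 < t → HasDerivAt g' (g'' t) t) (hx : x ∈ cone N) (i k : Fin N) :
    hess (rootSum w v g) i k x = rootSum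
      (fun a b => w a b * ((Pi.single k 1 : Fin N → ℝ) a - (Pi.single k 1 : Fin N → ℝ) b)
        * ((Pi.single i 1 : Fin N → ℝ) a - (Pi.single i 1 : Fin N → ℝ) b))
      (fun a => v a * (Pi.single k 1 : Fin N → ℝ) a * (Pi.single i 1 : Fin N → ℝ) a) g'' x := by
  rw [hess, pd, (pd_rootSum_eventuallyEq hg hx k).fderiv_eq, fderiv_rootSum_apply hg' hx]

lemma sum_hess_rootSum (hg : ∀ t, 0 < t → HasDerivAt g (g' t) t)
    (hg' : ∀ t, 0 < t → HasDerivAt g' (g'' t) t) (hx : x ∈ cone N) (i : Fin N) :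
    ∑ k, hess (rootSum w v g) i k x = v i * g'' (x i) := by
  simp_rw [hess_rootSum hg hg' hx, sum_rootSum]
  simp [rootSum, mul_sub, sum_sub_distrib, Pi.single_apply]

end RootSum

section Prepotential

variable {Λ : ℝ}

lemma FA_eq_rootSum (N : ℕ) (Λ : ℝ) :
    FA N Λ = rootSum (fun _ _ => 1) (fun _ => 1) (fun t => t ^ 2 * log (t / Λ) / 2) := by
  funext x
  simp only [FA, rootSum, mul_sum, one_mul, mul_ite, mul_zero]
  congr 1 <;> refine sum_congr rfl fun i _ => ?_
  · exact sum_congr rfl fun j _ => by split_ifs <;> ring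
  · ring

lemma hasDerivAt_log_div (hΛ : Λ ≠ 0) {t : ℝ} (ht : t ≠ 0) :
    HasDerivAt (fun s => log (s / Λ)) t⁻¹ t := by
  refine (((hasDerivAt_id' t).div_const Λ).log (div_ne_zero ht hΛ)).congr_deriv ?_
  field_simp

lemma hasDerivAt_sq_mul_log_div (hΛ : Λ ≠ 0) {t : ℝ} (ht : 0 < t) :
    HasDerivAt (fun s => s ^ 2 * log (s / Λ) / 2) (t * log (t / Λ) + t / 2) t := by
  refine (((hasDerivAt_pow 2 t).mul (hasDerivAt_log_div hΛ ht.ne')).div_const 2).congr_deriv ?_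
  field_simp
  ring

lemma hasDerivAt_mul_log_div (hΛ : Λ ≠ 0) {t : ℝ} (ht : 0 < t) :
    HasDerivAt (fun s => s * log (s / Λ) + s / 2) (log (t / Λ) + 3 / 2) t := by
  refine (((hasDerivAt_id' t).mul (hasDerivAt_log_div hΛ ht.ne')).add
    ((hasDerivAt_id' t).div_const 2)).congr_deriv ?_
  field_simp
  ring

lemma sum_hess_FA (hΛ : Λ ≠ 0) {N : ℕ} {x : Fin N → ℝ} (hx : x ∈ cone N) (i : Fin N) :
    ∑ k, hess (FA N Λ) i k x = log (x i / Λ) + 3 / 2 := by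
  rw [FA_eq_rootSum, sum_hess_rootSum (fun _ => hasDerivAt_sq_mul_log_div hΛ)
    (fun _ => hasDerivAt_mul_log_div hΛ) hx, one_mul]

end Prepotential

theorem typeA_hessian_injective_general (N : ℕ) (x y : Fin N → ℝ)
    (hx : x ∈ cone N) (hy : y ∈ cone N)
    (h : ∀ i j : Fin N, hess (FA N (Real.exp (3/2))) i j x
        = hess (FA N (Real.exp (3/2))) i j y) :
    x = y := by
  funext i
  have hΛ : exp (3/2) ≠ 0 := exp_ne_zero _
  have hlog : log (x i / exp (3/2)) = log (y i / exp (3/2)) := by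
    have hrow := sum_hess_FA hΛ hx i
    rw [sum_congr rfl fun k _ => h i k, sum_hess_FA hΛ hy i] at hrow
    linarith
  have hdiv := log_injOn_pos (div_pos (hx.2 i) (exp_pos _)) (div_pos (hy.2 i) (exp_pos _)) hlog
  exact (div_left_inj' hΛ).1 hdiv

/-- the Hessian map of the type A prepotential with `Λ = e^{3/2}`
is injective on the cone. -/
theorem typeA_hessian_injective (N : ℕ) (hN : 2 ≤ N) (x y : Fin N → ℝ)
    (hx : x ∈ cone N) (hy : y ∈ cone N)
    (h : ∀ i j : Fin N, hess (FA N (Real.exp (3/2))) i j x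
        = hess (FA N (Real.exp (3/2))) i j y) :
    x = y :=
  typeA_hessian_injective_general N x y hx hy h
end

section
/- Let N ≥ 3, let F be the type A prepotential with Λ = e^{3/2} on the cone C = {x ∈ ℝ^N : x_1 > ⋯ > x_N > 0}, and let Q(x) = ∑_{i,j} a_{ij} x_i x_j be a quadratic form with real symmetric coefficient matrix (a_{ij}). If the Hessian entries of F + Q satisfy the type-A reduction at every point of C, then there exists c ∈ ℝ such that a_{ij} = c for all i ≠ j and a_{ii} = −N·c for all i; equivalently, Q(x) = −c·( ∑_{1≤i<j≤N} (x_i − x_j)² + ∑_{i=1}^N x_i² ). -/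
open Real Finset

/-- The type-A reduction: a second order system on the Hessian entries `T_ij`. -/
def typeAReduction {N : ℕ} (T : Fin N → Fin N → ℝ) : Prop :=
  (∀ i j k : Fin N, i < j → j < k →
      Real.exp (-(T i k)) = Real.exp (-(T i j)) + Real.exp (-(T j k))) ∧
  (∀ i j : Fin N, i < j →
      Real.exp (-(T i j)) = Real.exp (∑ p, T i p) - Real.exp (∑ q, T j q))

noncomputable def phi (u : ℝ) : ℝ := u * (Real.log u - 1)

lemma hasDerivAt_phi {u : ℝ} (hu : u ≠ 0) : HasDerivAt phi (Real.log u) u := by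
  have h := (hasDerivAt_id u).fun_mul ((Real.hasDerivAt_log hu).sub_const 1)
  refine h.congr_deriv ?_
  simp [hu]

lemma hfun_eq : (fun u : ℝ => u^2 * Real.log (u / Real.exp (3/2)))
    = fun u : ℝ => u^2 * (Real.log u - 3/2) := by
  funext u
  rcases eq_or_ne u 0 with h | h
  · simp [h]
  · rw [Real.log_div h (Real.exp_ne_zero _), Real.log_exp]

lemma hasDerivAt_h {u : ℝ} (hu : u ≠ 0) :
    HasDerivAt (fun u : ℝ => u^2 * Real.log (u / Real.exp (3/2))) (2 * phi u) u := by
  rw [hfun_eq]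
  have h := (hasDerivAt_pow 2 u).fun_mul ((Real.hasDerivAt_log hu).sub_const (3/2))
  refine h.congr_deriv ?_
  simp [phi]
  field_simp
  ring

noncomputable def prj {N : ℕ} (i : Fin N) : (Fin N → ℝ) →L[ℝ] ℝ :=
  ContinuousLinearMap.proj i

lemma prj_hasFDerivAt {N : ℕ} (i : Fin N) (x : Fin N → ℝ) :
    HasFDerivAt (fun w : Fin N → ℝ => w i) (prj i) x :=
  (prj i).hasFDerivAt

noncomputable def L (N : ℕ) (a : Fin N → Fin N → ℝ) (x : Fin N → ℝ) : (Fin N → ℝ) →L[ℝ] ℝ :=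
  (1/2 : ℝ) • (∑ i : Fin N, ∑ j : Fin N,
      if i < j then (2 * phi (x i - x j)) • (prj i - prj j) else 0)
  + (1/2 : ℝ) • (∑ i : Fin N, (2 * phi (x i)) • prj i)
  + ∑ p : Fin N, ∑ q : Fin N, ((a p q * x p) • prj q + x q • ((a p q) • prj p))

/-- the open set where everything is smooth -/
def U (N : ℕ) : Set (Fin N → ℝ) :=
  {x | (∀ p q : Fin N, p ≠ q → x p ≠ x q) ∧ ∀ p, x p ≠ 0}

lemma isOpen_U (N : ℕ) : IsOpen (U N) := by
  have h1 : U N = (⋂ p : Fin N, ⋂ q : Fin N, ⋂ _ : p ≠ q, {x : Fin N → ℝ | x p ≠ x q})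
      ∩ ⋂ p : Fin N, {x : Fin N → ℝ | x p ≠ 0} := by
    ext x
    simp [U, Set.mem_iInter]
  rw [h1]
  apply IsOpen.inter
  · refine isOpen_iInter_of_finite fun p => isOpen_iInter_of_finite fun q => ?_
    refine isOpen_iInter_of_finite fun hpq => ?_
    have h : IsOpen ((fun x : Fin N → ℝ => x p - x q) ⁻¹' ({(0:ℝ)}ᶜ)) :=
      IsOpen.preimage ((continuous_apply p).sub (continuous_apply q)) isOpen_compl_singleton
    convert h using 1
    ext x; simp [sub_eq_zero]
  · refine isOpen_iInter_of_finite fun p => ?_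
    have h : IsOpen ((fun x : Fin N → ℝ => x p) ⁻¹' ({(0:ℝ)}ᶜ)) :=
      IsOpen.preimage (continuous_apply p) isOpen_compl_singleton
    exact h

lemma cone_subset_U (N : ℕ) : cone N ⊆ U N := by
  rintro x ⟨hanti, hpos⟩
  refine ⟨fun p q hpq => ?_, fun p => (hpos p).ne'⟩
  rcases lt_or_gt_of_ne hpq with h | h
  · exact (hanti h).ne'
  · exact (hanti h).ne

lemma hasFDerivAt_f {N : ℕ} (a : Fin N → Fin N → ℝ) (x : Fin N → ℝ) (hx : x ∈ U N) :
    HasFDerivAt (fun w => FA N (Real.exp (3/2)) w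
        + ∑ p : Fin N, ∑ q : Fin N, a p q * w p * w q) (L N a x) x := by
  obtain ⟨hx, hx0⟩ := hx
  unfold FA L
  apply HasFDerivAt.add
  apply HasFDerivAt.add
  · refine HasFDerivAt.const_mul ?_ _
    refine HasFDerivAt.fun_sum fun i _ => HasFDerivAt.fun_sum fun j _ => ?_
    rcases lt_or_ge i j with hij | hij
    · simp only [if_pos hij]
      have hsub : HasFDerivAt (fun w : Fin N → ℝ => w i - w j) (prj i - prj j) x :=
        (prj_hasFDerivAt i x).sub (prj_hasFDerivAt j x)
      exact (hasDerivAt_h (sub_ne_zero.2 (hx i j (ne_of_lt hij)))).comp_hasFDerivAt x hsub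
    · simp only [if_neg (not_lt.2 hij)]
      exact hasFDerivAt_const 0 x
  · refine HasFDerivAt.const_mul ?_ _
    refine HasFDerivAt.fun_sum fun i _ => ?_
    exact (hasDerivAt_h (hx0 i)).comp_hasFDerivAt x (prj_hasFDerivAt i x)
  · refine HasFDerivAt.fun_sum fun p _ => HasFDerivAt.fun_sum fun q _ => ?_
    exact (((prj_hasFDerivAt p x).const_mul (a p q)).mul (prj_hasFDerivAt q x))

def S {N : ℕ} (j i : Fin N) : ℝ := if i = j then 1 else 0

noncomputable def G (N : ℕ) (a : Fin N → Fin N → ℝ) (j : Fin N) (x : Fin N → ℝ) : ℝ :=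
  (1/2 : ℝ) * (∑ i : Fin N, ∑ k : Fin N,
      if i < k then (2 * phi (x i - x k)) * (S j i - S j k) else 0)
  + (1/2 : ℝ) * (∑ i : Fin N, (2 * phi (x i)) * S j i)
  + ∑ p : Fin N, ∑ q : Fin N, ((a p q * x p) * S j q + x q * ((a p q) * S j p))

lemma L_app {N : ℕ} (a : Fin N → Fin N → ℝ) (x : Fin N → ℝ) (j : Fin N) :
    L N a x (Pi.single j 1) = G N a j x := by
  simp only [L, G, ContinuousLinearMap.add_apply, ContinuousLinearMap.smul_apply,
    ContinuousLinearMap.coe_sum', Finset.sum_apply, ContinuousLinearMap.sub_apply,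
    ContinuousLinearMap.coe_smul', Pi.smul_apply]
  congr 1
  · congr 1
    · congr 1
      refine Finset.sum_congr rfl fun i _ => Finset.sum_congr rfl fun k _ => ?_
      split
      · simp [prj, S, Pi.single_apply, smul_eq_mul]
      · simp
    · congr 1
      refine Finset.sum_congr rfl fun i _ => ?_
      simp [prj, S, Pi.single_apply, smul_eq_mul]
  · refine Finset.sum_congr rfl fun p _ => Finset.sum_congr rfl fun q _ => ?_
    simp [prj, S, Pi.single_apply, smul_eq_mul]

lemma pd_eq {N : ℕ} (a : Fin N → Fin N → ℝ) (j : Fin N) (x : Fin N → ℝ) (hx : x ∈ U N) :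
    pd j (fun w => FA N (Real.exp (3/2)) w
        + ∑ p : Fin N, ∑ q : Fin N, a p q * w p * w q) x = G N a j x := by
  rw [pd, (hasFDerivAt_f a x hx).fderiv, L_app]

noncomputable def M (N : ℕ) (a : Fin N → Fin N → ℝ) (j : Fin N) (x : Fin N → ℝ) :
    (Fin N → ℝ) →L[ℝ] ℝ :=
  (1/2 : ℝ) • (∑ i : Fin N, ∑ k : Fin N,
      if i < k then ((2 * Real.log (x i - x k)) * (S j i - S j k)) • (prj i - prj k) else 0)
  + (1/2 : ℝ) • (∑ i : Fin N, ((2 * Real.log (x i)) * S j i) • prj i)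
  + ∑ p : Fin N, ∑ q : Fin N, ((S j q) • ((a p q) • prj p) + ((a p q) * S j p) • prj q)

lemma hasFDerivAt_G {N : ℕ} (a : Fin N → Fin N → ℝ) (j : Fin N) (x : Fin N → ℝ)
    (hx : x ∈ U N) : HasFDerivAt (G N a j) (M N a j x) x := by
  obtain ⟨hxd, hx0⟩ := hx
  unfold G M
  apply HasFDerivAt.add
  apply HasFDerivAt.add
  · refine HasFDerivAt.const_mul ?_ _
    refine HasFDerivAt.fun_sum fun i _ => HasFDerivAt.fun_sum fun k _ => ?_
    rcases lt_or_ge i k with hik | hik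
    · simp only [if_pos hik]
      have hsub : HasFDerivAt (fun w : Fin N → ℝ => w i - w k) (prj i - prj k) x :=
        (prj_hasFDerivAt i x).sub (prj_hasFDerivAt k x)
      exact (((hasDerivAt_phi (sub_ne_zero.2 (hxd i k (ne_of_lt hik)))).const_mul
        2).mul_const (S j i - S j k)).comp_hasFDerivAt x hsub
    · simp only [if_neg (not_lt.2 hik)]
      exact hasFDerivAt_const 0 x
  · refine HasFDerivAt.const_mul ?_ _
    refine HasFDerivAt.fun_sum fun i _ => ?_
    exact (((hasDerivAt_phi (hx0 i)).const_mul 2).mul_const (S j i)).comp_hasFDerivAt x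
      (prj_hasFDerivAt i x)
  · refine HasFDerivAt.fun_sum fun p _ => HasFDerivAt.fun_sum fun q _ => ?_
    exact (((prj_hasFDerivAt p x).const_mul (a p q)).mul_const (S j q)).add
      ((prj_hasFDerivAt q x).mul_const ((a p q) * S j p))

noncomputable def H (N : ℕ) (a : Fin N → Fin N → ℝ) (i j : Fin N) (x : Fin N → ℝ) : ℝ :=
  (1/2 : ℝ) * (∑ p : Fin N, ∑ q : Fin N,
      if p < q then ((2 * Real.log (x p - x q)) * (S j p - S j q)) * (S i p - S i q) else 0)
  + (1/2 : ℝ) * (∑ p : Fin N, ((2 * Real.log (x p)) * S j p) * S i p)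
  + ∑ p : Fin N, ∑ q : Fin N, ((S j q) * ((a p q) * S i p) + ((a p q) * S j p) * S i q)

lemma M_app {N : ℕ} (a : Fin N → Fin N → ℝ) (i j : Fin N) (x : Fin N → ℝ) :
    M N a j x (Pi.single i 1) = H N a i j x := by
  simp only [M, H, ContinuousLinearMap.add_apply, ContinuousLinearMap.smul_apply,
    ContinuousLinearMap.coe_sum', Finset.sum_apply, ContinuousLinearMap.sub_apply,
    ContinuousLinearMap.coe_smul', Pi.smul_apply]
  congr 1
  · congr 1
    · congr 1
      refine Finset.sum_congr rfl fun p _ => Finset.sum_congr rfl fun q _ => ?_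
      split
      · simp [prj, S, Pi.single_apply, smul_eq_mul]
      · simp
    · congr 1
      refine Finset.sum_congr rfl fun p _ => ?_
      simp [prj, S, Pi.single_apply, smul_eq_mul]
  · refine Finset.sum_congr rfl fun p _ => Finset.sum_congr rfl fun q _ => ?_
    simp [prj, S, Pi.single_apply, smul_eq_mul]

lemma hess_eq {N : ℕ} (a : Fin N → Fin N → ℝ) (i j : Fin N) (x : Fin N → ℝ) (hx : x ∈ U N) :
    hess (fun w => FA N (Real.exp (3/2)) w
        + ∑ p : Fin N, ∑ q : Fin N, a p q * w p * w q) i j x = H N a i j x := by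
  unfold hess
  have hev : pd j (fun w => FA N (Real.exp (3/2)) w
      + ∑ p : Fin N, ∑ q : Fin N, a p q * w p * w q) =ᶠ[nhds x] G N a j := by
    filter_upwards [(isOpen_U N).mem_nhds hx] with y hy
    exact pd_eq a j y hy
  rw [pd, hev.fderiv_eq, (hasFDerivAt_G a j x hx).fderiv, M_app]

lemma sum_S {N : ℕ} (p : Fin N) : ∑ j : Fin N, S j p = 1 := by
  simp [S, Finset.sum_ite_eq]

lemma collapse1 {N : ℕ} (i : Fin N) (g : Fin N → ℝ) : ∑ p : Fin N, g p * S i p = g i := by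
  rw [Finset.sum_eq_single_of_mem i (Finset.mem_univ i)]
  · simp [S]
  · intro b _ hb; simp [S, hb]

lemma pair_collapse {N : ℕ} (i j : Fin N) (hij : i < j) (c : Fin N → Fin N → ℝ) :
    ∑ p : Fin N, ∑ q : Fin N,
      (if p < q then c p q * (S j p - S j q) * (S i p - S i q) else 0) = - c i j := by
  rw [Finset.sum_eq_single_of_mem i (Finset.mem_univ i)]
  · rw [Finset.sum_eq_single_of_mem j (Finset.mem_univ j)]
    · simp [S, hij, hij.ne, hij.ne']
    · intro q _ hq
      rcases eq_or_ne q i with rfl | hqi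
      · simp [S, hij.ne']
      · simp [S, hq, hqi, hij.ne]
  · intro b _ hb
    refine Finset.sum_eq_zero fun q _ => ?_
    rcases eq_or_ne q i with rfl | hqi
    · rcases eq_or_ne b j with rfl | hbj
      · simp [S, not_lt.2 hij.le]
      · simp [S, hb, hbj, hij.ne]
    · simp [S, hb, hqi]

lemma mid_collapse {N : ℕ} (i j : Fin N) (hij : i ≠ j) (g : Fin N → ℝ) :
    ∑ p : Fin N, g p * S j p * S i p = 0 := by
  refine Finset.sum_eq_zero fun p _ => ?_
  rcases eq_or_ne p j with rfl | hpj
  · simp [S, Ne.symm hij]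
  · simp [S, hpj]

lemma q_collapse {N : ℕ} (i j : Fin N) (a : Fin N → Fin N → ℝ) :
    ∑ p : Fin N, ∑ q : Fin N, (S j q * (a p q * S i p) + a p q * S j p * S i q)
      = a i j + a j i := by
  have h1 : ∀ p : Fin N, ∑ q : Fin N, S j q * (a p q * S i p) = a p j * S i p := by
    intro p
    rw [Finset.sum_eq_single_of_mem j (Finset.mem_univ j)]
    · simp [S]
    · intro q _ hq; simp [S, hq]
  have h2 : ∀ p : Fin N, ∑ q : Fin N, a p q * S j p * S i q = a p i * S j p := by
    intro p
    rw [Finset.sum_eq_single_of_mem i (Finset.mem_univ i)]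
    · simp [S]
    · intro q _ hq; simp [S, hq]
  simp only [Finset.sum_add_distrib, h1, h2]
  rw [collapse1 i (fun p => a p j), collapse1 j (fun p => a p i)]

lemma H_offdiag {N : ℕ} (a : Fin N → Fin N → ℝ) (i j : Fin N) (hij : i ≠ j)
    (x : Fin N → ℝ) :
    H N a i j x = -Real.log (x i - x j) + (a i j + a j i) := by
  unfold H
  rw [q_collapse, mid_collapse i j hij]
  rcases lt_or_gt_of_ne hij with h | h
  · rw [pair_collapse i j h (fun p q => 2 * Real.log (x p - x q))]
    ring
  · have hcomm : ∀ p q : Fin N,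
        (if p < q then ((2 * Real.log (x p - x q)) * (S j p - S j q)) * (S i p - S i q) else 0)
        = (if p < q then (2 * Real.log (x p - x q)) * (S i p - S i q) * (S j p - S j q) else 0) := by
      intro p q; split
      · ring
      · rfl
    simp only [hcomm]
    rw [pair_collapse j i h (fun p q => 2 * Real.log (x p - x q))]
    rw [show x j - x i = -(x i - x j) by ring, Real.log_neg_eq_log]
    ring

lemma H_rowsum {N : ℕ} (a : Fin N → Fin N → ℝ) (i : Fin N) (x : Fin N → ℝ) :
    ∑ j : Fin N, H N a i j x
      = Real.log (x i) + ((∑ q : Fin N, a i q) + (∑ p : Fin N, a p i)) := by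
  unfold H
  rw [Finset.sum_add_distrib, Finset.sum_add_distrib]
  have hA : ∑ j : Fin N, (1/2 : ℝ) * (∑ p : Fin N, ∑ q : Fin N,
      if p < q then ((2 * Real.log (x p - x q)) * (S j p - S j q)) * (S i p - S i q) else 0)
      = 0 := by
    rw [← Finset.mul_sum]
    rw [Finset.sum_comm]
    have : ∀ p : Fin N, ∑ j : Fin N, ∑ q : Fin N,
        (if p < q then ((2 * Real.log (x p - x q)) * (S j p - S j q)) * (S i p - S i q) else 0)
        = 0 := by
      intro p
      rw [Finset.sum_comm]
      refine Finset.sum_eq_zero fun q _ => ?_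
      split
      · have hc : ∀ j : Fin N,
            ((2 * Real.log (x p - x q)) * (S j p - S j q)) * (S i p - S i q)
            = (S j p - S j q) * ((2 * Real.log (x p - x q)) * (S i p - S i q)) := by
          intro j; ring
        simp only [hc, ← Finset.sum_mul, Finset.sum_sub_distrib, sum_S, sub_self, zero_mul]
      · simp
    simp [this]
  have hB : ∑ j : Fin N, (1/2 : ℝ) * (∑ p : Fin N, ((2 * Real.log (x p)) * S j p) * S i p)
      = Real.log (x i) := by
    rw [← Finset.mul_sum, Finset.sum_comm]
    have : ∀ p : Fin N, ∑ j : Fin N, ((2 * Real.log (x p)) * S j p) * S i p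
        = (2 * Real.log (x p)) * S i p := by
      intro p
      have hc : ∀ j : Fin N, ((2 * Real.log (x p)) * S j p) * S i p
          = S j p * ((2 * Real.log (x p)) * S i p) := fun j => by ring
      simp only [hc, ← Finset.sum_mul, sum_S, one_mul]
    simp only [this]
    rw [collapse1 i (fun p => 2 * Real.log (x p))]
    ring
  have hC : ∑ j : Fin N, ∑ p : Fin N, ∑ q : Fin N,
      ((S j q) * ((a p q) * S i p) + ((a p q) * S j p) * S i q)
      = (∑ q : Fin N, a i q) + (∑ p : Fin N, a p i) := by
    rw [Finset.sum_comm]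
    have : ∀ p : Fin N, ∑ j : Fin N, ∑ q : Fin N,
        ((S j q) * ((a p q) * S i p) + ((a p q) * S j p) * S i q)
        = (∑ q : Fin N, a p q * S i p) + (∑ q : Fin N, a p q * S i q) := by
      intro p
      rw [Finset.sum_comm, ← Finset.sum_add_distrib]
      refine Finset.sum_congr rfl fun q _ => ?_
      rw [Finset.sum_add_distrib]
      congr 1
      · have hc : ∀ j : Fin N, (S j q) * ((a p q) * S i p)
            = S j q * ((a p q) * S i p) := fun j => rfl
        rw [← Finset.sum_mul, sum_S, one_mul]
      · have hc : ∀ j : Fin N, ((a p q) * S j p) * S i q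
            = S j p * ((a p q) * S i q) := fun j => by ring
        simp only [hc]
        rw [← Finset.sum_mul, sum_S, one_mul]
    simp only [this]
    rw [Finset.sum_add_distrib]
    congr 1
    · have : ∀ p : Fin N, ∑ q : Fin N, a p q * S i p = (∑ q : Fin N, a p q) * S i p := by
        intro p; rw [Finset.sum_mul]
      simp only [this]
      rw [collapse1 i (fun p => ∑ q : Fin N, a p q)]
    · have : ∀ p : Fin N, ∑ q : Fin N, a p q * S i q = a p i := fun p => collapse1 i (a p)
      simp only [this]
  rw [hA, hB, hC]
  ring

lemma cone_mem_aux {N : ℕ} (g : Fin N → ℝ) (h0 : ∀ p, 0 ≤ g p)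
    (hlt : ∀ p q : Fin N, p < q → g q < g p + 1) :
    (fun p : Fin N => (N : ℝ) - p + g p) ∈ cone N := by
  constructor
  · intro p q hpq
    have h1 : (p : ℝ) + 1 ≤ (q : ℝ) := by
      have : (p : ℕ) + 1 ≤ (q : ℕ) := Nat.succ_le_of_lt hpq
      exact_mod_cast this
    have h2 := hlt p q hpq
    simp only
    linarith
  · intro p
    have h1 : (p : ℝ) + 1 ≤ (N : ℝ) := by
      have : (p : ℕ) + 1 ≤ N := Nat.succ_le_of_lt p.isLt
      exact_mod_cast this
    have := h0 p
    simp only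
    linarith

/-- if adding a quadratic form `Q(x) = ∑ a_{ij} x_i x_j` to the type A
prepotential preserves the type-A reduction, then `a_{ij} = c` off the diagonal and
`a_{ii} = -N·c` on the diagonal, for some constant `c`. -/
theorem typeA_reduction_quadratic (N : ℕ) (hN : 3 ≤ N) (a : Fin N → Fin N → ℝ)
    (hsym : ∀ i j : Fin N, a j i = a i j)
    (hred : ∀ x ∈ cone N, typeAReduction (fun i j =>
      hess (fun w => FA N (Real.exp (3/2)) w
          + ∑ p : Fin N, ∑ q : Fin N, a p q * w p * w q) i j x)) :
    ∃ c : ℝ, (∀ i j : Fin N, i ≠ j → a i j = c) ∧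
      (∀ i : Fin N, a i i = -(N : ℝ) * c) := by
  have hH : ∀ x ∈ cone N, ∀ i j : Fin N,
      hess (fun w => FA N (Real.exp (3/2)) w
          + ∑ p : Fin N, ∑ q : Fin N, a p q * w p * w q) i j x = H N a i j x :=
    fun x hx i j => hess_eq a i j x (cone_subset_U N hx)
  -- the key consequence of the reduction
  have key : ∀ i j : Fin N, i < j → ∀ x ∈ cone N,
      (x i - x j) * Real.exp (-(2 * a i j))
        = x i * Real.exp (2 * ∑ p, a i p) - x j * Real.exp (2 * ∑ p, a j p) := by
    intro i j hij x hx
    have h2 := (hred x hx).2 i j hij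
    simp only [hH x hx] at h2
    have hxij : 0 < x i - x j := sub_pos.2 (hx.1 hij)
    have e1 : -(H N a i j x) = Real.log (x i - x j) + (-(2 * a i j)) := by
      rw [H_offdiag a i j hij.ne x, hsym i j]; ring
    have e2 : ∀ k : Fin N, (∑ p, H N a k p x) = Real.log (x k) + 2 * ∑ p, a k p := by
      intro k
      rw [H_rowsum, show (∑ p, a p k) = ∑ p, a k p from
        Finset.sum_congr rfl fun p _ => hsym k p]
      ring
    rw [e1, e2 i, e2 j, Real.exp_add, Real.exp_add, Real.exp_add,
      Real.exp_log hxij, Real.exp_log (hx.2 i), Real.exp_log (hx.2 j)] at h2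
    exact h2
  -- choose specific points
  set α : Fin N → ℝ := fun i => ∑ p, a i p with hα
  have main : ∀ i j : Fin N, i < j → α i = -(a i j) ∧ α j = -(a i j) := by
    intro i j hij
    have hij' : (i : ℝ) + 1 ≤ (j : ℝ) := by
      have : (i : ℕ) + 1 ≤ (j : ℕ) := Nat.succ_le_of_lt hij
      exact_mod_cast this
    have hiN : (i : ℝ) + 1 ≤ (N : ℝ) := by
      have : (i : ℕ) + 1 ≤ N := Nat.succ_le_of_lt i.isLt
      exact_mod_cast this
    have hjN : (j : ℝ) + 1 ≤ (N : ℝ) := by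
      have : (j : ℕ) + 1 ≤ N := Nat.succ_le_of_lt j.isLt
      exact_mod_cast this
    set B := Real.exp (-(2 * a i j)) with hB
    set P := Real.exp (2 * α i) with hP
    set Q := Real.exp (2 * α j) with hQ
    -- base point: g = 0
    have h0 : ((N : ℝ) - i - ((N : ℝ) - j)) * B = ((N : ℝ) - i) * P - ((N : ℝ) - j) * Q := by
      have hmem := cone_mem_aux (fun _ : Fin N => (0:ℝ)) (fun p => le_rfl)
        (fun p q _ => by norm_num)
      have := key i j hij _ hmem
      simpa using this
    -- point 1: g p = if p ≤ i then 1 else 0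
    have h1 : ((N : ℝ) - i + 1 - ((N : ℝ) - j)) * B
        = ((N : ℝ) - i + 1) * P - ((N : ℝ) - j) * Q := by
      have hmem := cone_mem_aux (fun p : Fin N => if p ≤ i then (1:ℝ) else 0)
        (fun p => by positivity)
        (fun p q hpq => by
          rcases le_or_gt q i with h | h
          · rw [if_pos h, if_pos (le_of_lt (lt_of_lt_of_le hpq h))]; norm_num
          · rw [if_neg (not_le.2 h)]
            split <;> norm_num)
      have := key i j hij _ hmem
      simp only [if_pos (le_refl i), if_neg (not_le.2 hij)] at this
      linarith [this]
    -- point 2: g p = if j ≤ p then 1/2 else 0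
    have h2 : ((N : ℝ) - i - ((N : ℝ) - j + 1/2)) * B
        = ((N : ℝ) - i) * P - ((N : ℝ) - j + 1/2) * Q := by
      have hmem := cone_mem_aux (fun p : Fin N => if j ≤ p then (1/2:ℝ) else 0)
        (fun p => by positivity)
        (fun p q hpq => by split <;> split <;> norm_num)
      have := key i j hij _ hmem
      simp only [if_pos (le_refl j), if_neg (not_le.2 hij)] at this
      linarith [this]
    have hBP : B = P := by
      have hd : ((N : ℝ) - j) > 0 := by linarith
      nlinarith [h0, h1]
    have hBQ : B = Q := by nlinarith [h0, h2]
    constructor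
    · have := hBP
      rw [hB, hP] at this
      have := Real.exp_injective this.symm
      linarith
    · have := hBQ
      rw [hB, hQ] at this
      have := Real.exp_injective this.symm
      linarith
  -- all α equal
  have h0N : 0 < N := by omega
  set z : Fin N := ⟨0, h0N⟩ with hz
  have hαconst : ∀ i : Fin N, α i = α z := by
    intro i
    rcases eq_or_ne i z with rfl | hi
    · rfl
    · have hzi : z < i := by
        have : (z : ℕ) = 0 := rfl
        have h1 : (0 : ℕ) < (i : ℕ) := Nat.pos_of_ne_zero (by
          intro h
          exact hi (Fin.ext h))
        exact h1
      obtain ⟨hz', hi'⟩ := main z i hzi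
      rw [hi', hz']
  have hoff : ∀ i j : Fin N, i ≠ j → a i j = -(α z) := by
    have hlt : ∀ i j : Fin N, i < j → a i j = -(α z) := by
      intro i j hij
      obtain ⟨h1, _⟩ := main i j hij
      rw [← hαconst i, h1]; ring
    intro i j hij
    rcases lt_or_gt_of_ne hij with h | h
    · exact hlt i j h
    · rw [hsym j i]
      exact hlt j i h
  refine ⟨-(α z), hoff, ?_⟩
  intro i
  have hsum : a i i + ∑ p ∈ Finset.univ.erase i, a i p = α i := by
    rw [hα]
    simp only
    rw [← Finset.sum_erase_add Finset.univ (a i) (Finset.mem_univ i)]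
    ring
  have herase : ∑ p ∈ Finset.univ.erase i, a i p = ((N : ℝ) - 1) * (-(α z)) := by
    rw [Finset.sum_congr rfl (fun p hp => hoff i p (Finset.ne_of_mem_erase hp).symm)]
    rw [Finset.sum_const, Finset.card_erase_of_mem (Finset.mem_univ i), Finset.card_univ,
      Fintype.card_fin, nsmul_eq_mul]
    have : ((N - 1 : ℕ) : ℝ) = (N : ℝ) - 1 := by
      have : (1 : ℕ) ≤ N := by omega
      push_cast [this]
      ring
    rw [this]
  have hαi := hαconst i
  rw [herase, hαi] at hsum
  linarith
end
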